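/- For all sufficiently large integers k, the polynomial Δ_k(z) has exactly one root, counted with multiplicity, in the open complex disk |z| < 1/√(8+8k). -/

import Mathlib

/-!
Write `s = √(8 + 8k)`, so that `p_k(z) = (1 - (s + 1)z)(1 + (s - 1)z)` has exactly one root,
`1/(s + 1)`, in the disk `|z| < 1/s`. On that disk the remaining term `4 C_k z^{2k+1} h_k(z)` is tiny
together with its Lipschitz constant, which is of order `k C_k s^{-2k}` and decays like `4^{-k}`.
The intermediate value theorem gives a real root `x₀ ∈ [1/(s + 1), 1/s)` of `Δ_k`. For `|z| < 1/s`
we have `|p_k(z) - p_k(x₀)| ≥ |z - x₀|`, while the perturbation moves by at most `4/5 |z - x₀|`;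
hence `|Δ_k(z)| ≥ |z - x₀|/5`. So `x₀` is the only root in the disk, and it is simple because the
same bound forces `|Δ_k'(x₀)| ≥ 1/5`.
-/

open Filter Polynomial

/-- `C_k = (2k-2)!/(k-1)!` as a complex number. -/
noncomputable def CcC (k : ℕ) : ℂ :=
  ((2 * k - 2).factorial : ℂ) / ((k - 1).factorial : ℂ)

/-- The polynomial `p_k(z) = 1 − 2z − (7+8k)z²` over `ℂ`. -/
noncomputable def Ppoly (k : ℕ) : Polynomial ℂ :=
  Polynomial.C 1 - Polynomial.C 2 * Polynomial.X
    - Polynomial.C (7 + 8 * (k : ℂ)) * Polynomial.X ^ 2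

/-- The polynomial `h_k(z) = 1 − z − C_k·z^{2k+1}` over `ℂ`. -/
noncomputable def Hpoly (k : ℕ) : Polynomial ℂ :=
  Polynomial.C 1 - Polynomial.X - Polynomial.C (CcC k) * Polynomial.X ^ (2 * k + 1)

/-- The polynomial `Δ_k(z) = p_k(z) + 4·C_k·z^{2k+1}·h_k(z)` over `ℂ`. -/
noncomputable def Dpoly (k : ℕ) : Polynomial ℂ :=
  Ppoly k + Polynomial.C (4 * CcC k) * Polynomial.X ^ (2 * k + 1) * Hpoly k

open Topology
open scoped Nat

section RootCount

variable {𝕜 : Type*} [NontriviallyNormedField 𝕜]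

theorem le_norm_derivative_eval_of_le_norm_eval {f : 𝕜[X]} {z₀ : 𝕜} {c : ℝ}
    (hz₀ : f.IsRoot z₀) (hlow : ∀ᶠ z in 𝓝 z₀, c * ‖z - z₀‖ ≤ ‖f.eval z‖) :
    c ≤ ‖f.derivative.eval z₀‖ := by
  refine ge_of_tendsto (hasDerivAt_iff_tendsto_slope.1 (f.hasDerivAt z₀)).norm ?_
  filter_upwards [self_mem_nhdsWithin, nhdsWithin_le_nhds hlow] with z hne hz
  have hpos : 0 < ‖z - z₀‖ := norm_pos_iff.2 (sub_ne_zero.2 hne)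
  rw [slope_def_field, hz₀.eq_zero, sub_zero, norm_div, le_div_iff₀ hpos]
  exact hz

theorem card_filter_roots_eq_one_of_le_norm_eval {f : 𝕜[X]} {p : 𝕜 → Prop} [DecidablePred p]
    {z₀ : 𝕜} {c : ℝ} (hc : 0 < c) (hz₀ : f.IsRoot z₀) (hp : {z | p z} ∈ 𝓝 z₀)
    (hlow : ∀ z, p z → c * ‖z - z₀‖ ≤ ‖f.eval z‖) :
    (f.roots.filter p).card = 1 := by
  classical
  have hderiv : f.derivative.eval z₀ ≠ 0 := norm_pos_iff.1 <|
    hc.trans_le (le_norm_derivative_eval_of_le_norm_eval hz₀ (mem_of_superset hp hlow))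
  have hf : f ≠ 0 := by rintro rfl; simp at hderiv
  have hsimple : f.rootMultiplicity z₀ = 1 := by
    have hpos := (rootMultiplicity_pos hf).2 hz₀
    have hnot := (one_lt_rootMultiplicity_iff_isRoot hf).not.2 fun h ↦ hderiv h.2
    omega
  have hunique : ∀ z ∈ f.roots.filter p, z₀ = z := fun z hz ↦ by
    obtain ⟨hroot, hpz⟩ := Multiset.mem_filter.1 hz
    have := hlow z hpz
    rw [(mem_roots hf).1 hroot, norm_zero] at this
    exact (sub_eq_zero.1 (norm_le_zero_iff.1 (nonpos_of_mul_nonpos_right this hc))).symm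
  rw [← Multiset.count_eq_card.2 hunique,
    Multiset.count_filter_of_pos (show p z₀ from mem_of_mem_nhds hp), count_roots, hsimple]

end RootCount

open Finset in
theorem norm_pow_sub_pow_le {𝕜 : Type*} [NormedField 𝕜] {x y : 𝕜} {M : ℝ} (hx : ‖x‖ ≤ M)
    (hy : ‖y‖ ≤ M) (n : ℕ) : ‖x ^ n - y ^ n‖ ≤ n * M ^ (n - 1) * ‖x - y‖ := by
  rw [← geom_sum₂_mul, norm_mul]
  gcongr
  calc ‖∑ i ∈ range n, x ^ i * y ^ (n - 1 - i)‖
      ≤ ∑ i ∈ range n, ‖x ^ i * y ^ (n - 1 - i)‖ := norm_sum_le _ _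
    _ ≤ ∑ i ∈ range n, M ^ (n - 1) := sum_le_sum fun i hi ↦ by
        have hi : i + (n - 1 - i) = n - 1 := by have := mem_range.1 hi; omega
        have hM : 0 ≤ M := (norm_nonneg x).trans hx
        rw [norm_mul, norm_pow, norm_pow, ← hi, pow_add, Nat.add_sub_cancel_left]
        gcongr
    _ = n * M ^ (n - 1) := by simp

/-- `Δ_k` is `perturbedQuadratic √(8 + 8k) C_k (2k)` (see `eval_Dpoly`), with `p_k` factored. -/
def perturbedQuadratic {K : Type*} [CommRing K] (s c : K) (n : ℕ) (z : K) : K :=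
  (1 - (s + 1) * z) * (1 + (s - 1) * z) + 4 * c * z ^ (n + 1) * (1 - z - c * z ^ (n + 1))

theorem perturbedQuadratic_ofReal (s c x : ℝ) (n : ℕ) :
    perturbedQuadratic (s : ℂ) c n x = ((perturbedQuadratic s c n x : ℝ) : ℂ) := by
  simp [perturbedQuadratic]

theorem exists_perturbedQuadratic_eq_zero {s c : ℝ} {n : ℕ} (hs : 1 ≤ s) (hc : 0 ≤ c)
    (hsmall : 4 * c * s⁻¹ ^ n < 1) :
    ∃ x ∈ Set.Ico (s + 1)⁻¹ s⁻¹, perturbedQuadratic s c n x = 0 := by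
  set r := s⁻¹
  have hr : 0 < r := by positivity
  have hr1 : r ≤ 1 := inv_le_one_of_one_le₀ hs
  have hsr : s * r = 1 := mul_inv_cancel₀ (by positivity)
  -- `Δ ≥ 0` at the root `x₁` of the quadratic; at `x₂` the quadratic has dropped below `-δ`,
  -- and `δ` bounds the perturbation on `[0, s⁻¹]`.
  set x₁ := (s + 1)⁻¹
  set δ := 4 * c * r ^ (n + 1)
  set x₂ := (1 + δ) * x₁
  have hδ : 0 ≤ δ := by positivity
  have hx₁ : 0 < x₁ := by positivity
  have hsx₁ : (s + 1) * x₁ = 1 := mul_inv_cancel₀ (by positivity)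
  have hx₁r : x₁ ≤ r := inv_anti₀ (by positivity) (by linarith)
  have hx₁x₂ : x₁ ≤ x₂ := le_mul_of_one_le_left hx₁.le (by linarith)
  have hx₂ : 0 ≤ x₂ := hx₁.le.trans hx₁x₂
  have hx₂r : x₂ < r := by
    have : s * δ < 1 := by
      calc s * δ = 4 * c * r ^ n * (s * r) := by ring
        _ < 1 := by rwa [hsr, mul_one]
    nlinarith
  have hF₁ : 0 ≤ perturbedQuadratic s c n x₁ := by
    have hpow : c * x₁ ^ (n + 1) ≤ c * r ^ n := by
      gcongr
      calc x₁ ^ (n + 1) ≤ x₁ ^ n := pow_le_pow_of_le_one hx₁.le (hx₁r.trans hr1) n.le_succ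
        _ ≤ r ^ n := by gcongr
    have hx₁half : x₁ ≤ 1 / 2 := by nlinarith
    unfold perturbedQuadratic
    rw [sub_eq_zero_of_eq (by linarith [hsx₁] : 1 = (s + 1) * x₁), zero_mul, zero_add]
    have : 0 ≤ 1 - x₁ - c * x₁ ^ (n + 1) := by linarith
    positivity
  have hF₂ : perturbedQuadratic s c n x₂ ≤ 0 := by
    have hquad : (1 - (s + 1) * x₂) * (1 + (s - 1) * x₂) ≤ -δ := by
      have : 1 - (s + 1) * x₂ = -δ := by
        calc 1 - (s + 1) * x₂ = 1 - (1 + δ) * ((s + 1) * x₁) := by ring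
          _ = -δ := by rw [hsx₁]; ring
      rw [this]
      nlinarith [mul_nonneg hδ (mul_nonneg (sub_nonneg.2 hs) hx₂)]
    have hpert : 4 * c * x₂ ^ (n + 1) * (1 - x₂ - c * x₂ ^ (n + 1)) ≤ δ := by
      calc 4 * c * x₂ ^ (n + 1) * (1 - x₂ - c * x₂ ^ (n + 1)) ≤ 4 * c * x₂ ^ (n + 1) * 1 := by
            gcongr
            have : 0 ≤ c * x₂ ^ (n + 1) := by positivity
            linarith
        _ ≤ 4 * c * r ^ (n + 1) := by rw [mul_one]; gcongr
    unfold perturbedQuadratic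
    linarith
  obtain ⟨x, hx, hFx⟩ := intermediate_value_Icc' hx₁x₂
    (by unfold perturbedQuadratic; fun_prop : Continuous (perturbedQuadratic s c n)).continuousOn
    ⟨hF₂, hF₁⟩
  exact ⟨x, ⟨hx.1, hx.2.trans_lt hx₂r⟩, hFx⟩

theorem norm_sub_le_norm_quadratic_sub {s x : ℝ} {z : ℂ} (hs : 1 ≤ s) (hx : (s + 1)⁻¹ ≤ x)
    (hz : ‖z‖ ≤ s⁻¹) :
    ‖z - x‖ ≤
      ‖(1 - (s + 1) * z) * (1 + (s - 1) * z) - (1 - (s + 1) * x) * (1 + (s - 1) * x)‖ := by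
  have hfactor : (1 - (s + 1) * z) * (1 + (s - 1) * z) - (1 - (s + 1) * x) * (1 + (s - 1) * x)
      = -(z - x) * (2 + ((s ^ 2 - 1 : ℝ) : ℂ) * (z + x)) := by push_cast; ring
  rw [hfactor, norm_mul, norm_neg]
  -- `Re (z + x) ≥ (s + 1)⁻¹ - s⁻¹`, so the real part of the slope is at least `1 + s⁻¹`.
  refine le_mul_of_one_le_right (norm_nonneg _) (le_trans ?_ (Complex.re_le_norm _))
  have hre : -s⁻¹ ≤ z.re := (neg_le_neg hz).trans (neg_le_of_abs_le (Complex.abs_re_le_norm z))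
  have hs₀ : s ≠ 0 := by positivity
  have h₁ : (s ^ 2 - 1) * (s + 1)⁻¹ = s - 1 := by field_simp; ring
  have h₂ : (s ^ 2 - 1) * s⁻¹ = s - s⁻¹ := by field_simp
  have hsq : 0 ≤ s ^ 2 - 1 := by nlinarith
  simp only [Complex.add_re, Complex.re_ofReal_mul, Complex.ofReal_re, Complex.re_ofNat]
  nlinarith [mul_le_mul_of_nonneg_left (add_le_add hre hx) hsq, inv_nonneg.2 (zero_le_one.trans hs)]

theorem norm_perturbation_sub_le {𝕜 : Type*} [RCLike 𝕜] {c z w : 𝕜} {ρ : ℝ} (n : ℕ)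
    (hρ : ρ ≤ 1) (hz : ‖z‖ ≤ ρ) (hw : ‖w‖ ≤ ρ) :
    ‖4 * c * z ^ (n + 1) * (1 - z - c * z ^ (n + 1))
        - 4 * c * w ^ (n + 1) * (1 - w - c * w ^ (n + 1))‖
      ≤ (4 * (2 * n + 3) * (‖c‖ * ρ ^ n) + 8 * (n + 1) * (‖c‖ * ρ ^ n) ^ 2) * ‖z - w‖ := by
  have hρ₀ : 0 ≤ ρ := (norm_nonneg z).trans hz
  have hexpand : 4 * c * z ^ (n + 1) * (1 - z - c * z ^ (n + 1))
      - 4 * c * w ^ (n + 1) * (1 - w - c * w ^ (n + 1))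
      = 4 * c * ((z ^ (n + 1) - w ^ (n + 1)) - (z ^ (n + 2) - w ^ (n + 2)))
        - 4 * c ^ 2 * (z ^ (2 * n + 2) - w ^ (2 * n + 2)) := by ring
  have h₁ := norm_pow_sub_pow_le hz hw (n + 1)
  have h₂ := norm_pow_sub_pow_le hz hw (n + 2)
  have h₃ := norm_pow_sub_pow_le hz hw (2 * n + 2)
  simp only [Nat.add_sub_cancel, show 2 * n + 2 - 1 = 2 * n + 1 by omega] at h₁ h₂ h₃
  push_cast at h₁ h₂ h₃
  have hρn₁ : ρ ^ (n + 1) ≤ ρ ^ n := pow_le_pow_of_le_one hρ₀ hρ n.le_succ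
  have hρn₂ : ρ ^ (2 * n + 1) ≤ (ρ ^ n) ^ 2 := by
    rw [← pow_mul, mul_comm]; exact pow_le_pow_of_le_one hρ₀ hρ (by omega)
  rw [hexpand]
  calc _ ≤ 4 * ‖c‖ * (‖z ^ (n + 1) - w ^ (n + 1)‖ + ‖z ^ (n + 2) - w ^ (n + 2)‖)
        + 4 * ‖c‖ ^ 2 * ‖z ^ (2 * n + 2) - w ^ (2 * n + 2)‖ := by
        refine (norm_sub_le _ _).trans (add_le_add ?_ ?_)
        · rw [norm_mul, norm_mul, RCLike.norm_ofNat]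
          gcongr
          exact norm_sub_le _ _
        · rw [norm_mul, norm_mul, RCLike.norm_ofNat, norm_pow]
    _ ≤ 4 * ‖c‖ * ((n + 1) * ρ ^ n * ‖z - w‖ + (n + 2) * ρ ^ (n + 1) * ‖z - w‖)
        + 4 * ‖c‖ ^ 2 * ((2 * n + 2) * ρ ^ (2 * n + 1) * ‖z - w‖) := by gcongr
    _ ≤ 4 * ‖c‖ * ((n + 1) * ρ ^ n * ‖z - w‖ + (n + 2) * ρ ^ n * ‖z - w‖)
        + 4 * ‖c‖ ^ 2 * ((2 * n + 2) * (ρ ^ n) ^ 2 * ‖z - w‖) := by gcongr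
    _ = _ := by ring

theorem norm_sub_le_norm_perturbedQuadratic_sub {s c x : ℝ} {n : ℕ} {z : ℂ} (hs : 1 ≤ s)
    (hc : 0 ≤ c) (hsmall : 16 * (n + 1) * c * s⁻¹ ^ n ≤ 1) (hx : x ∈ Set.Icc (s + 1)⁻¹ s⁻¹)
    (hz : ‖z‖ ≤ s⁻¹) :
    5⁻¹ * ‖z - x‖ ≤ ‖perturbedQuadratic (s : ℂ) c n z - perturbedQuadratic (s : ℂ) c n x‖ := by
  have hx₀ : 0 ≤ x := (inv_nonneg.2 (by linarith)).trans hx.1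
  have hquad := norm_sub_le_norm_quadratic_sub hs hx.1 hz
  have hpert := norm_perturbation_sub_le (c := (c : ℂ)) n (inv_le_one_of_one_le₀ hs) hz
    (by rw [Complex.norm_real, Real.norm_of_nonneg hx₀]; exact hx.2)
  rw [Complex.norm_real, Real.norm_of_nonneg hc] at hpert
  have hη : 0 ≤ c * s⁻¹ ^ n := by have := zero_le_one.trans hs; positivity
  have hlip : 4 * (2 * n + 3) * (c * s⁻¹ ^ n) + 8 * (n + 1) * (c * s⁻¹ ^ n) ^ 2 ≤ 4 / 5 := by
    have hn : (0 : ℝ) ≤ n := n.cast_nonneg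
    have hη₁ : c * s⁻¹ ^ n ≤ 1 / 16 := by nlinarith
    nlinarith [mul_le_mul_of_nonneg_right hsmall hη]
  unfold perturbedQuadratic
  set q : ℂ → ℂ := fun z ↦ (1 - (s + 1) * z) * (1 + (s - 1) * z)
  set e : ℂ → ℂ := fun z ↦ 4 * c * z ^ (n + 1) * (1 - z - c * z ^ (n + 1))
  have hsplit : q z - q x = (q z + e z - (q x + e x)) - (e z - e x) := by ring
  have := norm_sub_le (q z + e z - (q x + e x)) (e z - e x)
  rw [← hsplit] at this
  nlinarith [norm_nonneg (z - x)]

theorem card_filter_roots_eq_one_of_eval_eq_perturbedQuadratic {f : ℂ[X]} {s c : ℝ} {n : ℕ}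
    [DecidablePred fun z : ℂ ↦ ‖z‖ < s⁻¹] (hs : 1 ≤ s) (hc : 0 ≤ c)
    (hsmall : 16 * (n + 1) * c * s⁻¹ ^ n ≤ 1)
    (hf : ∀ z, f.eval z = perturbedQuadratic (s : ℂ) c n z) :
    (f.roots.filter fun z : ℂ ↦ ‖z‖ < s⁻¹).card = 1 := by
  obtain ⟨x, hx, hroot⟩ := exists_perturbedQuadratic_eq_zero (n := n) hs hc (by
    have : 0 ≤ c * s⁻¹ ^ n := by have := zero_le_one.trans hs; positivity
    linarith [mul_nonneg n.cast_nonneg this])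
  have hx₀ : 0 ≤ x := (inv_nonneg.2 (by linarith)).trans hx.1
  refine card_filter_roots_eq_one_of_le_norm_eval (c := 5⁻¹) (z₀ := x) (by norm_num) ?_ ?_
    fun z hz ↦ ?_
  · rw [IsRoot.def, hf, perturbedQuadratic_ofReal, hroot, Complex.ofReal_zero]
  · refine (isOpen_lt continuous_norm continuous_const).mem_nhds ?_
    rw [Set.mem_ofPred_eq, Complex.norm_real, Real.norm_of_nonneg hx₀]
    exact hx.2
  · simpa [hf, perturbedQuadratic_ofReal, hroot] using
      norm_sub_le_norm_perturbedQuadratic_sub hs hc hsmall (Set.Ico_subset_Icc_self hx) hz.le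

theorem Nat.factorial_add_le_factorial_mul_pow (m j : ℕ) : (m + j)! ≤ m ! * (m + j) ^ j := by
  rw [← Nat.factorial_mul_ascFactorial]
  gcongr
  exact Nat.ascFactorial_le_pow_add m j

theorem sixteen_mul_factorial_div_mul_inv_sqrt_pow_le {k : ℕ} (hk : 2 ≤ k) :
    16 * (((2 * k : ℕ) : ℝ) + 1) * (((2 * k - 2)! : ℝ) / (k - 1)!) * (√(8 + 8 * k))⁻¹ ^ (2 * k)
      ≤ 1 := by
  obtain ⟨m, rfl⟩ : ∃ m, k = m + 1 := ⟨k - 1, by omega⟩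
  have hm : 1 ≤ m := by omega
  have hX : (0 : ℝ) < 16 + 8 * m := by positivity
  have hratio : ((m + m)! : ℝ) / m ! ≤ (2 * m) ^ m := by
    rw [div_le_iff₀ (by positivity), mul_comm]
    exact_mod_cast (Nat.factorial_add_le_factorial_mul_pow m m).trans_eq (by ring)
  have hquarter : (2 * m * (16 + 8 * m : ℝ)⁻¹) ^ m ≤ 1 / 4 := by
    refine (pow_le_of_le_one (by positivity) ?_ (by omega)).trans ?_ <;>
      rw [mul_inv_le_iff₀ hX] <;> linarith
  rw [show 2 * (m + 1) - 2 = m + m by omega, Nat.add_sub_cancel, pow_mul, inv_pow,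
    Real.sq_sqrt (by positivity)]
  push_cast
  calc (16 : ℝ) * (2 * (m + 1) + 1) * ((m + m)! / m !) * (8 + 8 * (m + 1) : ℝ)⁻¹ ^ (m + 1)
      ≤ (16 : ℝ) * (2 * m + 3) * (2 * m) ^ m * (16 + 8 * m : ℝ)⁻¹ ^ (m + 1) := by
        rw [show (8 + 8 * (m + 1) : ℝ) = 16 + 8 * m by ring,
          show (2 * (m + 1) + 1 : ℝ) = 2 * m + 3 by ring]
        gcongr
    _ = (16 : ℝ) * (2 * m + 3) * (2 * m * (16 + 8 * m : ℝ)⁻¹) ^ m * (16 + 8 * m : ℝ)⁻¹ := by ring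
    _ ≤ (16 : ℝ) * (2 * m + 3) * (1 / 4) * (16 + 8 * m : ℝ)⁻¹ := by gcongr
    _ ≤ 1 := by rw [mul_inv_le_iff₀ hX]; linarith

theorem eval_Dpoly (k : ℕ) (z : ℂ) :
    (Dpoly k).eval z = perturbedQuadratic (√(8 + 8 * k) : ℂ)
      (((2 * k - 2)! / (k - 1)! : ℝ) : ℂ) (2 * k) z := by
  have hs : ((√(8 + 8 * k) : ℝ) : ℂ) ^ 2 = 8 + 8 * k := by
    rw [← Complex.ofReal_pow, Real.sq_sqrt (by positivity)]
    push_cast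
    ring
  simp only [Dpoly, Ppoly, Hpoly, CcC, perturbedQuadratic, eval_add, eval_sub, eval_mul, eval_C,
    eval_X, eval_pow]
  push_cast
  linear_combination z ^ 2 * hs

open Classical in
/-- For all sufficiently large integers `k`, the polynomial `Δ_k(z)` has
exactly one root, counted with multiplicity, in the open complex disk `|z| < 1/√(8+8k)`. -/
theorem statement4 :
    ∀ᶠ k : ℕ in atTop,
      (((Dpoly k).roots.filter
          (fun z : ℂ => ‖z‖ < 1 / Real.sqrt (8 + 8 * k))).card) = 1 := by
  filter_upwards [eventually_ge_atTop 2] with k hk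
  simp only [one_div]
  exact card_filter_roots_eq_one_of_eval_eq_perturbedQuadratic
    (Real.one_le_sqrt.2 (by linarith)) (by positivity)
    (sixteen_mul_factorial_div_mul_inv_sqrt_pow_le hk) (eval_Dpoly k)
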